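/- For every integer n ≥ 1: 5·σ₃(n) = (6n−1)·σ₁(n) + 12·Σ_{i=1有}^{n−1} σ₁(i)·σ₁(n−i), where the sum is over pairs of positive integers i, j with i + j = n. -/
import Mathlib

set_option maxHeartbeats 1000000


/-- the divisor power sum `σ_k(n) = Σ_{d∣n} d^k` -/
def sigmaNat (k n : ℕ) : ℕ := ∑ d ∈ n.divisors, d ^ k

namespace BesgeAux

open Finset

abbrev Quad := ℕ × ℕ × ℕ × ℕ

def Q (n : ℕ) : Finset Quad :=
  ((Finset.Icc 1 n ×ˢ Finset.Icc 1 n ×ˢ Finset.Icc 1 n ×ˢ Finset.Icc 1 n)).filter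
    (fun p => p.1 * p.2.2.1 + p.2.1 * p.2.2.2 = n)

lemma mem_Q {n : ℕ} {p : Quad} :
    p ∈ Q n ↔ 1 ≤ p.1 ∧ 1 ≤ p.2.1 ∧ 1 ≤ p.2.2.1 ∧ 1 ≤ p.2.2.2 ∧
      p.1 * p.2.2.1 + p.2.1 * p.2.2.2 = n := by
  obtain ⟨a, b, x, y⟩ := p
  simp only [Q, mem_filter, mem_product, mem_Icc]
  constructor
  · rintro ⟨⟨⟨h1,_⟩,⟨h2,_⟩,⟨h3,_⟩,⟨h4,_⟩⟩, h5⟩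
    exact ⟨h1, h2, h3, h4, h5⟩
  · rintro ⟨h1, h2, h3, h4, h5⟩
    have hax : a * x ≤ n := h5 ▸ Nat.le_add_right _ _
    have hby : b * y ≤ n := h5 ▸ Nat.le_add_left _ _
    refine ⟨⟨⟨h1, ?_⟩, ⟨h2, ?_⟩, ⟨h3, ?_⟩, ⟨h4, ?_⟩⟩, h5⟩
    · exact le_trans (Nat.le_mul_of_pos_right a h3) hax
    · exact le_trans (Nat.le_mul_of_pos_right b h4) hby
    · exact le_trans (Nat.le_mul_of_pos_left x h1) hax
    · exact le_trans (Nat.le_mul_of_pos_left y h2) hby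
def sw (p : Quad) : Quad := (p.2.1, p.1, p.2.2.2, p.2.2.1)

lemma sw_mem_Q {n : ℕ} {p : Quad} (h : p ∈ Q n) : sw p ∈ Q n := by
  rw [mem_Q] at h ⊢
  obtain ⟨h1, h2, h3, h4, h5⟩ := h
  exact ⟨h2, h1, h4, h3, by simp only [sw]; omega⟩

lemma sum_swap_filter {n : ℕ} (c : Quad → Prop) [DecidablePred c] (g : Quad → ℤ) :
    ∑ p ∈ (Q n).filter c, g p = ∑ p ∈ (Q n).filter (fun p => c (sw p)), g (sw p) := by
  refine Finset.sum_nbij' sw sw ?_ ?_ ?_ ?_ ?_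
  · intro p hp
    rw [mem_filter] at hp ⊢
    exact ⟨sw_mem_Q hp.1, by show c (sw (sw p)); exact hp.2⟩
  · intro p hp
    rw [mem_filter] at hp ⊢
    exact ⟨sw_mem_Q hp.1, hp.2⟩
  · intro p _; rfl
  · intro p _; rfl
  · intro p _; rfl

def phi (p : Quad) : Quad := (p.1, p.1 + p.2.1, p.2.2.1 - p.2.2.2, p.2.2.2)
def psi (p : Quad) : Quad := (p.1, p.2.1 - p.1, p.2.2.1 + p.2.2.2, p.2.2.2)

lemma sum_phi {n : ℕ} (g : Quad → ℤ) :
    ∑ p ∈ (Q n).filter (fun p => p.2.2.2 < p.2.2.1), g (phi p)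
      = ∑ q ∈ (Q n).filter (fun q => q.1 < q.2.1), g q := by
  refine Finset.sum_nbij' phi psi ?_ ?_ ?_ ?_ ?_
  · rintro ⟨a, b, x, y⟩ hp
    simp only [mem_filter, mem_Q, phi] at hp ⊢
    obtain ⟨⟨h1, h2, h3, h4, h5⟩, h6⟩ := hp
    have hxy : x - y + y = x := Nat.sub_add_cancel (le_of_lt h6)
    refine ⟨⟨h1, by omega, by omega, h4, ?_⟩, by omega⟩
    calc a * (x - y) + (a + b) * y = a * ((x - y) + y) + b * y := by ring
      _ = n := by rw [hxy]; exact h5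
  · rintro ⟨a, b, x, y⟩ hq
    simp only [mem_filter, mem_Q, psi] at hq ⊢
    obtain ⟨⟨h1, h2, h3, h4, h5⟩, h6⟩ := hq
    have hba : b - a + a = b := Nat.sub_add_cancel (le_of_lt h6)
    refine ⟨⟨h1, by omega, by omega, h4, ?_⟩, by omega⟩
    calc a * (x + y) + (b - a) * y = a * x + ((b - a) + a) * y := by ring
      _ = n := by rw [hba]; exact h5
  · rintro ⟨a, b, x, y⟩ hp
    simp only [mem_filter, mem_Q] at hp
    simp only [phi, psi, Prod.mk.injEq]
    refine ⟨trivial, by omega, by omega, trivial⟩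
  · rintro ⟨a, b, x, y⟩ hq
    simp only [mem_filter, mem_Q] at hq
    simp only [phi, psi, Prod.mk.injEq]
    refine ⟨trivial, by omega, by omega, trivial⟩
  · intro p _; rfl
lemma sum_tri (s : Finset Quad) (u v : Quad → ℕ) (g : Quad → ℤ) :
    ∑ p ∈ s, g p =
      ∑ p ∈ s.filter (fun p => u p < v p), g p +
      ∑ p ∈ s.filter (fun p => u p = v p), g p +
      ∑ p ∈ s.filter (fun p => v p < u p), g p := by
  have e1 : s.filter (fun p => ¬ u p < v p) =
      s.filter (fun p => u p = v p) ∪ s.filter (fun p => v p < u p) := by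
    rw [← Finset.filter_or]
    apply Finset.filter_congr; intro p _; constructor <;> intro h <;> omega
  have e2 : Disjoint (s.filter (fun p => u p = v p)) (s.filter (fun p => v p < u p)) := by
    rw [Finset.disjoint_left]
    intro p hp hq
    simp only [mem_filter] at hp hq
    omega
  rw [← Finset.sum_filter_add_sum_filter_not s (fun p => u p < v p) g, e1,
    Finset.sum_union e2, add_assoc]

lemma sum_diag_xy {n : ℕ} (w : ℕ → ℕ → ℤ) :
    ∑ p ∈ (Q n).filter (fun p => p.2.2.1 = p.2.2.2), w p.1 p.2.1
      = ∑ d ∈ n.divisors, ∑ a ∈ Finset.Ico 1 d, w a (d - a) := by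
  have hmap : ∀ p ∈ (Q n).filter (fun p => p.2.2.1 = p.2.2.2),
      (fun (p : Quad) => p.1 + p.2.1) p ∈ n.divisors := by
    rintro ⟨a, b, x, y⟩ hp
    simp only [mem_filter, mem_Q] at hp
    obtain ⟨⟨h1, h2, h3, h4, h5⟩, h6⟩ := hp
    subst h6
    rw [Nat.mem_divisors]
    exact ⟨⟨x, by rw [← h5]; ring⟩, by have := Nat.mul_pos h1 h3; omega⟩
  rw [← Finset.sum_fiberwise_of_maps_to hmap (fun p => w p.1 p.2.1)]
  apply Finset.sum_congr rfl
  intro d hd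
  rw [Nat.mem_divisors] at hd
  obtain ⟨⟨e, he⟩, hn0⟩ := hd
  refine Finset.sum_nbij' (fun p => p.1) (fun a => (a, d - a, n / d, n / d)) ?_ ?_ ?_ ?_ ?_
  · rintro ⟨a, b, x, y⟩ hp
    simp only [mem_filter, mem_Q] at hp
    simp only [Finset.mem_Ico]
    omega
  · intro a ha
    simp only [Finset.mem_Ico] at ha
    have hdpos : 0 < d := by omega
    have hdvd : d ∣ n := ⟨e, he⟩
    have hq : 0 < n / d := Nat.div_pos (Nat.le_of_dvd (by omega) hdvd) hdpos
    simp only [mem_filter, mem_Q]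
    refine ⟨⟨⟨by omega, by omega, by omega, by omega, ?_⟩, by trivial⟩, by omega⟩
    calc a * (n / d) + (d - a) * (n / d) = (a + (d - a)) * (n / d) := by ring
      _ = d * (n / d) := by congr 1; omega
      _ = n := Nat.mul_div_cancel' hdvd
  · rintro ⟨a, b, x, y⟩ hp
    simp only [mem_filter, mem_Q] at hp
    obtain ⟨⟨⟨h1, h2, h3, h4, h5⟩, h6⟩, h7⟩ := hp
    have hdx : d * x = n := by
      subst h6; rw [← h7, ← h5]; ring
    have hx : x = n / d := by
      rw [← hdx, Nat.mul_div_cancel_left _ (by omega)]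
    simp only [Prod.mk.injEq]
    refine ⟨by trivial, by omega, by omega, by omega⟩
  · intro a _; rfl
  · rintro ⟨a, b, x, y⟩ hp
    simp only [mem_filter, mem_Q] at hp
    simp only
    congr 1
    omega

lemma sum_diag_ab {n : ℕ} (w : ℕ → ℤ) :
    ∑ p ∈ (Q n).filter (fun p => p.1 = p.2.1), w p.1
      = ∑ de ∈ n.divisorsAntidiagonal, ((de.2 : ℤ) - 1) * w de.1 := by
  have hmap : ∀ p ∈ (Q n).filter (fun p => p.1 = p.2.1),
      (fun (p : Quad) => (p.1, p.2.2.1 + p.2.2.2)) p ∈ n.divisorsAntidiagonal := by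
    rintro ⟨a, b, x, y⟩ hp
    simp only [mem_filter, mem_Q] at hp
    obtain ⟨⟨h1, h2, h3, h4, h5⟩, h6⟩ := hp
    rw [Nat.mem_divisorsAntidiagonal]
    constructor
    · show a * (x + y) = n
      rw [← h5]; subst h6; ring
    · have := Nat.mul_pos h1 h3; omega
  rw [← Finset.sum_fiberwise_of_maps_to hmap (fun p => w p.1)]
  apply Finset.sum_congr rfl
  rintro ⟨d, e⟩ hde
  rw [Nat.mem_divisorsAntidiagonal] at hde
  obtain ⟨hde1, hn0⟩ := hde
  simp only at hde1
  have hd : 0 < d := by by_contra h; push_neg at h; interval_cases d <;> simp_all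
  have he : 0 < e := by by_contra h; push_neg at h; interval_cases e <;> simp_all
  have : ∑ p ∈ ((Q n).filter (fun p => p.1 = p.2.1)).filter
      (fun p => (p.1, p.2.2.1 + p.2.2.2) = (d, e)), w p.1
      = ∑ x ∈ Finset.Ico 1 e, w d := by
    refine Finset.sum_nbij' (fun p => p.2.2.1) (fun x => (d, d, x, e - x)) ?_ ?_ ?_ ?_ ?_
    · rintro ⟨a, b, x, y⟩ hp
      simp only [mem_filter, mem_Q, Prod.mk.injEq] at hp
      simp only [Finset.mem_Ico]
      omega
    · intro x hx
      simp only [Finset.mem_Ico] at hx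
      simp only [mem_filter, mem_Q, Prod.mk.injEq]
      refine ⟨⟨⟨by omega, by omega, by omega, by omega, ?_⟩, by trivial⟩, by trivial, by omega⟩
      calc d * x + d * (e - x) = d * (x + (e - x)) := by ring
        _ = d * e := by congr 1; omega
        _ = n := hde1
    · rintro ⟨a, b, x, y⟩ hp
      simp only [mem_filter, mem_Q, Prod.mk.injEq] at hp
      simp only [Prod.mk.injEq]
      refine ⟨by omega, by omega, by trivial, by omega⟩
    · intro x _; rfl
    · rintro ⟨a, b, x, y⟩ hp
      simp only [mem_filter, mem_Q, Prod.mk.injEq] at hp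
      simp only
      congr 1
      omega
  rw [this, Finset.sum_const, Nat.card_Ico]
  rw [nsmul_eq_mul]
  congr 1
  push_cast [Nat.cast_sub he]
  ring
lemma cast_sigma (k m : ℕ) : (sigmaNat k m : ℤ) = ∑ d ∈ m.divisors, (d : ℤ) ^ k := by
  simp [sigmaNat]

lemma sigma_fst (m : ℕ) : ∑ u ∈ m.divisorsAntidiagonal, (u.1 : ℤ) = (sigmaNat 1 m : ℤ) := by
  rw [cast_sigma, Nat.sum_divisorsAntidiagonal (fun d e => (d : ℤ))]
  simp

lemma sum_ab_mul {n : ℕ} :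
    ∑ p ∈ Q n, (p.1 : ℤ) * p.2.1
      = ∑ m ∈ Finset.Ico 1 n, (sigmaNat 1 m : ℤ) * (sigmaNat 1 (n - m)) := by
  have hmap : ∀ p ∈ Q n, (fun (p : Quad) => p.1 * p.2.2.1) p ∈ Finset.Ico 1 n := by
    rintro ⟨a, b, x, y⟩ hp
    simp only [mem_Q] at hp
    obtain ⟨h1, h2, h3, h4, h5⟩ := hp
    have hax := Nat.mul_pos h1 h3
    have hby := Nat.mul_pos h2 h4
    simp only [Finset.mem_Ico]
    omega
  rw [← Finset.sum_fiberwise_of_maps_to hmap (fun p => (p.1 : ℤ) * p.2.1)]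
  apply Finset.sum_congr rfl
  intro m hm
  simp only [Finset.mem_Ico] at hm
  have key : ∑ p ∈ (Q n).filter (fun p => p.1 * p.2.2.1 = m), (p.1 : ℤ) * p.2.1
      = ∑ q ∈ m.divisorsAntidiagonal ×ˢ (n - m).divisorsAntidiagonal, (q.1.1 : ℤ) * q.2.1 := by
    refine Finset.sum_nbij' (fun p => ((p.1, p.2.2.1), (p.2.1, p.2.2.2)))
      (fun q => (q.1.1, q.2.1, q.1.2, q.2.2)) ?_ ?_ ?_ ?_ ?_
    · rintro ⟨a, b, x, y⟩ hp
      simp only [mem_filter, mem_Q] at hp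
      obtain ⟨⟨h1, h2, h3, h4, h5⟩, h6⟩ := hp
      have hby := Nat.mul_pos h2 h4
      simp only [Finset.mem_product, Nat.mem_divisorsAntidiagonal]
      constructor
      · exact ⟨h6, by omega⟩
      · constructor
        · show b * y = n - m; omega
        · omega
    · rintro ⟨⟨a, x⟩, ⟨b, y⟩⟩ hq
      simp only [Finset.mem_product, Nat.mem_divisorsAntidiagonal] at hq
      obtain ⟨⟨hax, hm0⟩, ⟨hby, hnm0⟩⟩ := hq
      have ha : a ≠ 0 := by rintro rfl; simp at hax; omega
      have hx : x ≠ 0 := by rintro rfl; simp at hax; omega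
      have hb : b ≠ 0 := by rintro rfl; simp at hby; omega
      have hy : y ≠ 0 := by rintro rfl; simp at hby; omega
      simp only [mem_filter, mem_Q]
      refine ⟨⟨by omega, by omega, by omega, by omega, ?_⟩, hax⟩
      show a * x + b * y = n
      omega
    · rintro ⟨a, b, x, y⟩ _; rfl
    · rintro ⟨⟨a, x⟩, ⟨b, y⟩⟩ _; rfl
    · rintro ⟨a, b, x, y⟩ _; rfl
  rw [key, Finset.sum_product, ← sigma_fst, ← sigma_fst, Finset.sum_mul_sum]
lemma sum_sq (d : ℕ) : 6 * ∑ a ∈ Finset.Ico 1 d, (a : ℤ)^2 = ((d:ℤ)-1)*d*(2*d-1) := by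
  induction d with
  | zero => simp
  | succ k ih =>
    rcases Nat.eq_zero_or_pos k with rfl | hk
    · simp
    · rw [Finset.sum_Ico_succ_top (by omega), mul_add, ih]
      push_cast
      ring

lemma cast_sigma1 (m : ℕ) : (sigmaNat 1 m : ℤ) = ∑ d ∈ m.divisors, (d : ℤ) := by
  simp [sigmaNat]

lemma main_int {n : ℕ} (hn : 1 ≤ n) :
    12 * (∑ p ∈ Q n, (p.1 : ℤ) * p.2.1) + 6 * n * (sigmaNat 1 n : ℤ)
      = 5 * (sigmaNat 3 n : ℤ) + (sigmaNat 1 n : ℤ) := by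
  -- trichotomies
  have hT1 : ∑ p ∈ Q n, ((p.1 : ℤ) + p.2.1)^2 =
      ∑ p ∈ (Q n).filter (fun p => p.2.2.1 < p.2.2.2), ((p.1 : ℤ) + p.2.1)^2 +
      ∑ p ∈ (Q n).filter (fun p => p.2.2.1 = p.2.2.2), ((p.1 : ℤ) + p.2.1)^2 +
      ∑ p ∈ (Q n).filter (fun p => p.2.2.2 < p.2.2.1), ((p.1 : ℤ) + p.2.1)^2 :=
    sum_tri _ (fun p => p.2.2.1) (fun p => p.2.2.2) _
  have hT2 : ∑ p ∈ Q n, ((p.1 : ℤ) - p.2.1)^2 =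
      ∑ p ∈ (Q n).filter (fun p => p.1 < p.2.1), ((p.1 : ℤ) - p.2.1)^2 +
      ∑ p ∈ (Q n).filter (fun p => p.1 = p.2.1), ((p.1 : ℤ) - p.2.1)^2 +
      ∑ p ∈ (Q n).filter (fun p => p.2.1 < p.1), ((p.1 : ℤ) - p.2.1)^2 :=
    sum_tri _ (fun p => p.1) (fun p => p.2.1) _
  have hTa1 : ∑ p ∈ Q n, (p.1 : ℤ)^2 =
      ∑ p ∈ (Q n).filter (fun p => p.2.2.1 < p.2.2.2), (p.1 : ℤ)^2 +
      ∑ p ∈ (Q n).filter (fun p => p.2.2.1 = p.2.2.2), (p.1 : ℤ)^2 +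
      ∑ p ∈ (Q n).filter (fun p => p.2.2.2 < p.2.2.1), (p.1 : ℤ)^2 :=
    sum_tri _ (fun p => p.2.2.1) (fun p => p.2.2.2) _
  have hTa2 : ∑ p ∈ Q n, (p.1 : ℤ)^2 =
      ∑ p ∈ (Q n).filter (fun p => p.1 < p.2.1), (p.1 : ℤ)^2 +
      ∑ p ∈ (Q n).filter (fun p => p.1 = p.2.1), (p.1 : ℤ)^2 +
      ∑ p ∈ (Q n).filter (fun p => p.2.1 < p.1), (p.1 : ℤ)^2 :=
    sum_tri _ (fun p => p.1) (fun p => p.2.1) _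
  -- transfers along phi
  have hF1 : ∑ p ∈ (Q n).filter (fun p => p.2.2.2 < p.2.2.1), ((p.1 : ℤ) + p.2.1)^2
      = ∑ p ∈ (Q n).filter (fun p => p.1 < p.2.1), (p.2.1 : ℤ)^2 := by
    have h := sum_phi (n := n) (fun q => (q.2.1 : ℤ)^2)
    rw [← h]
    refine Finset.sum_congr rfl ?_
    rintro ⟨a, b, x, y⟩ _
    simp only [phi]
    push_cast
    ring
  have hF7 : ∑ p ∈ (Q n).filter (fun p => p.2.2.2 < p.2.2.1), (p.1 : ℤ)^2
      = ∑ p ∈ (Q n).filter (fun p => p.1 < p.2.1), (p.1 : ℤ)^2 := by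
    have h := sum_phi (n := n) (fun q => (q.1 : ℤ)^2)
    rw [← h]
    exact Finset.sum_congr rfl (fun p _ => rfl)
  have hF6a : ∑ p ∈ (Q n).filter (fun p => p.2.2.2 < p.2.2.1), (p.2.1 : ℤ)^2
      = ∑ p ∈ (Q n).filter (fun p => p.1 < p.2.1), ((p.1 : ℤ) - p.2.1)^2 := by
    calc ∑ p ∈ (Q n).filter (fun p => p.2.2.2 < p.2.2.1), (p.2.1 : ℤ)^2
        = ∑ p ∈ (Q n).filter (fun p => p.2.2.2 < p.2.2.1),
            (((phi p).2.1 : ℤ) - ((phi p).1 : ℤ))^2 := by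
          refine Finset.sum_congr rfl ?_
          rintro ⟨a, b, x, y⟩ _
          simp only [phi]
          push_cast
          ring
      _ = ∑ q ∈ (Q n).filter (fun q => q.1 < q.2.1), ((q.2.1 : ℤ) - q.1)^2 :=
          sum_phi (n := n) (fun q => ((q.2.1 : ℤ) - q.1)^2)
      _ = ∑ p ∈ (Q n).filter (fun p => p.1 < p.2.1), ((p.1 : ℤ) - p.2.1)^2 :=
          Finset.sum_congr rfl (fun p _ => by ring)
  -- transfers along swap
  have hF2 : ∑ p ∈ (Q n).filter (fun p => p.2.2.1 < p.2.2.2), ((p.1 : ℤ) + p.2.1)^2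
      = ∑ p ∈ (Q n).filter (fun p => p.2.2.2 < p.2.2.1), ((p.1 : ℤ) + p.2.1)^2 := by
    have h := sum_swap_filter (n := n) (fun p => p.2.2.1 < p.2.2.2)
      (fun p => ((p.1 : ℤ) + p.2.1)^2)
    rw [h]
    refine Finset.sum_congr rfl ?_
    rintro ⟨a, b, x, y⟩ _
    simp only [sw]
    ring
  have hF5 : ∑ p ∈ (Q n).filter (fun p => p.2.1 < p.1), ((p.1 : ℤ) - p.2.1)^2
      = ∑ p ∈ (Q n).filter (fun p => p.1 < p.2.1), ((p.1 : ℤ) - p.2.1)^2 := by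
    have h := sum_swap_filter (n := n) (fun p => p.2.1 < p.1)
      (fun p => ((p.1 : ℤ) - p.2.1)^2)
    rw [h]
    refine Finset.sum_congr rfl ?_
    rintro ⟨a, b, x, y⟩ _
    simp only [sw]
    ring
  have hF6b : ∑ p ∈ (Q n).filter (fun p => p.2.2.1 < p.2.2.2), (p.1 : ℤ)^2
      = ∑ p ∈ (Q n).filter (fun p => p.2.2.2 < p.2.2.1), (p.2.1 : ℤ)^2 := by
    have h := sum_swap_filter (n := n) (fun p => p.2.2.1 < p.2.2.2)
      (fun p => (p.1 : ℤ)^2)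
    rw [h]
    exact Finset.sum_congr rfl (fun p _ => rfl)
  have hF8 : ∑ p ∈ (Q n).filter (fun p => p.2.1 < p.1), (p.1 : ℤ)^2
      = ∑ p ∈ (Q n).filter (fun p => p.1 < p.2.1), (p.2.1 : ℤ)^2 := by
    have h := sum_swap_filter (n := n) (fun p => p.2.1 < p.1)
      (fun p => (p.1 : ℤ)^2)
    rw [h]
    exact Finset.sum_congr rfl (fun p _ => rfl)
  -- diagonal evaluations
  have hF3 : ∑ p ∈ (Q n).filter (fun p => p.2.2.1 = p.2.2.2), ((p.1 : ℤ) + p.2.1)^2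
      = ∑ d ∈ n.divisors, ((d : ℤ) - 1) * (d : ℤ)^2 := by
    refine Eq.trans (sum_diag_xy (fun a b => ((a : ℤ) + (b : ℤ))^2)) ?_
    refine Finset.sum_congr rfl ?_
    intro d hd
    have hd1 : 1 ≤ d := Nat.pos_of_mem_divisors hd
    have : ∀ a ∈ Finset.Ico 1 d, ((a : ℤ) + ((d - a : ℕ) : ℤ))^2 = (d : ℤ)^2 := by
      intro a ha
      simp only [Finset.mem_Ico] at ha
      rw [Nat.cast_sub (by omega)]
      ring
    rw [Finset.sum_congr rfl this, Finset.sum_const, Nat.card_Ico, nsmul_eq_mul]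
    rw [Nat.cast_sub hd1]
    push_cast
    ring
  have hF10 : ∑ p ∈ (Q n).filter (fun p => p.2.2.1 = p.2.2.2), (p.1 : ℤ)^2
      = ∑ d ∈ n.divisors, ∑ a ∈ Finset.Ico 1 d, (a : ℤ)^2 :=
    sum_diag_xy (fun a b => (a : ℤ)^2)
  have hF4 : ∑ p ∈ (Q n).filter (fun p => p.1 = p.2.1), ((p.1 : ℤ) - p.2.1)^2 = 0 := by
    refine Finset.sum_eq_zero ?_
    intro p hp
    rw [mem_filter] at hp
    rw [hp.2]
    ring
  have hF11 : ∑ p ∈ (Q n).filter (fun p => p.1 = p.2.1), (p.1 : ℤ)^2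
      = ∑ d ∈ n.divisors, (((n / d : ℕ) : ℤ) - 1) * (d : ℤ)^2 :=
    Eq.trans (sum_diag_ab (fun a => (a : ℤ)^2))
      (Nat.sum_divisorsAntidiagonal (fun d e => ((e : ℤ) - 1) * (d : ℤ)^2))
  -- pointwise square identity
  have hE12 : ∑ p ∈ Q n, ((p.1 : ℤ) + p.2.1)^2
      = ∑ p ∈ Q n, ((p.1 : ℤ) - p.2.1)^2 + 4 * ∑ p ∈ Q n, (p.1 : ℤ) * p.2.1 := by
    rw [Finset.mul_sum, ← Finset.sum_add_distrib]
    exact Finset.sum_congr rfl (fun p _ => by ring)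
  -- six times the square pyramid
  have h6sq : 6 * (∑ d ∈ n.divisors, ∑ a ∈ Finset.Ico 1 d, (a : ℤ)^2)
      = ∑ d ∈ n.divisors, ((d : ℤ) - 1) * d * (2 * d - 1) := by
    rw [Finset.mul_sum]
    exact Finset.sum_congr rfl (fun d _ => sum_sq d)
  -- the linear combination
  have h12 : 12 * (∑ p ∈ Q n, (p.1 : ℤ) * p.2.1)
      = 3 * (∑ d ∈ n.divisors, ((d : ℤ) - 1) * (d : ℤ)^2)
        - 6 * (∑ d ∈ n.divisors, (((n / d : ℕ) : ℤ) - 1) * (d : ℤ)^2)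
        + ∑ d ∈ n.divisors, ((d : ℤ) - 1) * d * (2 * d - 1) := by
    linarith [hT1, hT2, hTa1, hTa2, hF1, hF2, hF3, hF4, hF5, hF6a, hF6b, hF7, hF8,
      hF10, hF11, hE12, h6sq]
  -- final divisor-sum algebra
  have hfinal : 3 * (∑ d ∈ n.divisors, ((d : ℤ) - 1) * (d : ℤ)^2)
        - 6 * (∑ d ∈ n.divisors, (((n / d : ℕ) : ℤ) - 1) * (d : ℤ)^2)
        + (∑ d ∈ n.divisors, ((d : ℤ) - 1) * d * (2 * d - 1))
        + 6 * (n : ℤ) * (∑ d ∈ n.divisors, (d : ℤ))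
      = 5 * (∑ d ∈ n.divisors, (d : ℤ)^3) + ∑ d ∈ n.divisors, (d : ℤ) := by
    rw [Finset.mul_sum, Finset.mul_sum, Finset.mul_sum, Finset.mul_sum,
      ← Finset.sum_sub_distrib, ← Finset.sum_add_distrib, ← Finset.sum_add_distrib,
      ← Finset.sum_add_distrib]
    refine Finset.sum_congr rfl ?_
    intro d hd
    have hdvd := (Nat.mem_divisors.mp hd).1
    have hdu : (d : ℤ) * ((n / d : ℕ) : ℤ) = (n : ℤ) := by
      exact_mod_cast Nat.mul_div_cancel' hdvd
    linear_combination (-6 * (d : ℤ)) * hdu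
  rw [cast_sigma 3 n, cast_sigma1 n]
  linarith [h12, hfinal]

end BesgeAux

theorem sigma_three_identity (n : ℕ) (hn : 1 ≤ n) :
    5 * sigmaNat 3 n =
      (6 * n - 1) * sigmaNat 1 n +
        12 * ∑ i ∈ Finset.Ico 1 n, sigmaNat 1 i * sigmaNat 1 (n - i) := by
  have h1 := BesgeAux.main_int (n := n) hn
  have h2 := BesgeAux.sum_ab_mul (n := n)
  zify [show (1 : ℕ) ≤ 6 * n by omega]
  push_cast at h2 ⊢
  linarith [h1, h2]
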